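/- Let ε > 0, N ≥ 2, E the N×N matrix with E_{ii} = ε, E_{i+1,i} = −ε for i = 0,…,N−2, E_{0,N−1} = −ε, all other entries zero, and M the 2N×2N block matrix [[0, I],[E, 0]]. Then λ ∈ ℂ is an eigenvalue of M (as a complex matrix) if and only if λ² = ε·(1 − exp(2π√(−1) k / N)) for some k ∈ {0, 1, …, N−1}. In particular every eigenvalue λ of M satisfies |λ| ≤ √(2ε). -/

import Mathlib

/-!
Eliminating the second block gives `det (λ I - [[0, I], [E, 0]]) = det (λ² I - E)`. The matrix
`μ I - E` has `μ - ε` on the diagonal and `ε` on the cyclic subdiagonal; expanding along the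
first row leaves two triangular minors, so its determinant is `(μ - ε)^N - (-ε)^N`. Hence `λ` is
an eigenvalue iff `λ² - ε = -ε ζ` for an `N`-th root of unity `ζ`, and then
`|λ|² ≤ |λ² - ε| + ε = 2ε`.
-/

open Matrix Complex Real

section Determinants

variable {ι R : Type*} [Fintype ι] [DecidableEq ι] [CommRing R]

theorem det_smul_one_sub_fromBlocks_zero_one_zero (a : R) (A : Matrix ι ι R) :
    det (a • 1 - fromBlocks 0 (1 : Matrix ι ι R) A 0) = det (a ^ 2 • 1 - A) := by
  have hblocks : a • 1 - fromBlocks 0 (1 : Matrix ι ι R) A 0 =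
      fromBlocks (a • 1) (-1) (-A) (a • 1) := by
    rw [← fromBlocks_one, fromBlocks_smul, sub_eq_add_neg, fromBlocks_neg, fromBlocks_add]
    simp
  have hcol : fromBlocks (a • 1) (-1) (-A) (a • 1) *
        fromBlocks 1 (1 : Matrix ι ι R) ((a - 1) • 1) (a • 1) =
      fromBlocks 1 (0 : Matrix ι ι R) ((a ^ 2 - a) • 1 - A) (a ^ 2 • 1 - A) := by
    simp only [fromBlocks_multiply, Matrix.mul_one, Matrix.mul_smul]
    congr 1 <;> module
  have hunimodular : det (fromBlocks 1 (1 : Matrix ι ι R) ((a - 1) • 1) (a • 1)) = 1 := by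
    simp [sub_smul]
  have := congrArg det hcol
  rwa [det_mul, hunimodular, mul_one, det_fromBlocks_zero₁₂, det_one, one_mul, ← hblocks]
    at this

def cyclicBidiagonal (N : ℕ) (a b : R) : Matrix (Fin N) (Fin N) R :=
  of fun i j => if (i : ℕ) = j then a else if (i : ℕ) = j + 1 then b
    else if (i : ℕ) = 0 ∧ (j : ℕ) = N - 1 then b else 0

theorem smul_one_sub_cyclicBidiagonal (N : ℕ) (c a b : R) :
    c • 1 - cyclicBidiagonal N a b = cyclicBidiagonal N (c - a) (-b) := by
  ext i j
  rw [Matrix.sub_apply, Matrix.smul_apply, one_apply]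
  simp only [cyclicBidiagonal, of_apply, Fin.ext_iff, smul_eq_mul]
  split_ifs <;> ring

theorem cyclicBidiagonal_map {S : Type*} [CommRing S] (f : R →+* S) (N : ℕ) (a b : R) :
    (cyclicBidiagonal N a b).map f = cyclicBidiagonal N (f a) (f b) := by
  ext i j
  simp only [cyclicBidiagonal, map_apply, of_apply]
  split_ifs <;> simp

theorem det_cyclicBidiagonal (n : ℕ) (a b : R) :
    det (cyclicBidiagonal (n + 2) a b) = a ^ (n + 2) - (-b) ^ (n + 2) := by
  set A := cyclicBidiagonal (n + 2) a b
  have hlower : (A.submatrix Fin.succ Fin.succ).IsLowerTriangular := by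
    intro i j (hij : (i : ℕ) < j)
    simp [A, cyclicBidiagonal, hij.ne, show (i : ℕ) ≠ j + 1 by omega]
  have hupper : (A.submatrix Fin.succ Fin.castSucc).IsUpperTriangular := by
    intro i j (hij : (j : ℕ) < i)
    simp [A, cyclicBidiagonal, hij.ne', show (i : ℕ) + 1 ≠ j by omega]
  have hrow (k : Fin n) : A 0 k.castSucc.succ = 0 := by
    simp [A, cyclicBidiagonal]
    omega
  rw [det_succ_row_zero, Fin.sum_univ_succ, Fin.sum_univ_castSucc]
  simp only [hrow, Fin.succAbove_zero, Fin.succ_last, Fin.succAbove_last,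
    det_of_isLowerTriangular _ hlower, det_of_isUpperTriangular hupper]
  simp [A, cyclicBidiagonal]
  ring

end Determinants

theorem pow_eq_pow_iff_exists_eq_mul_exp {z w : ℂ} {N : ℕ} (hw : w ≠ 0) (hN : N ≠ 0) :
    z ^ N = w ^ N ↔ ∃ k < N, z = w * exp (2 * π * I * k / N) := by
  have : NeZero N := ⟨hN⟩
  have hζ := isPrimitiveRoot_exp N hN
  have hζ_pow (k : ℕ) : exp (2 * π * I / N) ^ k = exp (2 * π * I * k / N) := by
    rw [← Complex.exp_nat_mul]; ring_nf
  rw [← div_eq_one_iff_eq (pow_ne_zero N hw), ← div_pow]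
  constructor
  · intro h
    obtain ⟨k, hk, hζk⟩ := hζ.eq_pow_of_pow_eq_one h
    refine ⟨k, hk, ?_⟩
    rw [← hζ_pow, hζk, mul_div_cancel₀ _ hw]
  · rintro ⟨k, -, rfl⟩
    rw [mul_div_cancel_left₀ _ hw, ← hζ_pow, ← pow_mul, pow_mul', hζ.pow_eq_one, one_pow]

theorem norm_eq_of_pow_eq_pow {z w : ℂ} {N : ℕ} (h : z ^ N = w ^ N) (hN : N ≠ 0) :
    ‖z‖ = ‖w‖ :=
  (pow_left_inj₀ (norm_nonneg z) (norm_nonneg w) hN).mp (by rw [← norm_pow, h, norm_pow])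

theorem block_matrix_eigenvalues
    (ε : ℝ) (hε : 0 < ε) (N : ℕ) (hN : 2 ≤ N)
    (E : Matrix (Fin N) (Fin N) ℝ)
    (hE : ∀ i j : Fin N, E i j =
      if (i : ℕ) = (j : ℕ) then ε
      else if (i : ℕ) = (j : ℕ) + 1 then -ε
      else if (i : ℕ) = 0 ∧ (j : ℕ) = N - 1 then -ε
      else 0)
    (M : Matrix (Fin N ⊕ Fin N) (Fin N ⊕ Fin N) ℝ)
    (hM : M = Matrix.fromBlocks 0 1 E 0) :
    ∀ lam : ℂ,
      (Matrix.det (lam • (1 : Matrix (Fin N ⊕ Fin N) (Fin N ⊕ Fin N) ℂ)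
          - M.map (fun r : ℝ => (r : ℂ))) = 0 ↔
        ∃ k : ℕ, k < N ∧
          lam ^ 2 = (ε : ℂ) * (1 - Complex.exp (2 * Real.pi * Complex.I * (k : ℂ) / (N : ℂ)))) ∧
      (Matrix.det (lam • (1 : Matrix (Fin N ⊕ Fin N) (Fin N ⊕ Fin N) ℂ)
          - M.map (fun r : ℝ => (r : ℂ))) = 0 →
        ‖lam‖ ≤ Real.sqrt (2 * ε)) := by
  obtain ⟨n, rfl⟩ : ∃ n, N = n + 2 := ⟨N - 2, by omega⟩
  have hE_cyc : E = cyclicBidiagonal (n + 2) ε (-ε) := Matrix.ext hE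
  have hMℂ : M.map (fun r : ℝ => (r : ℂ)) =
      fromBlocks 0 1 (cyclicBidiagonal (n + 2) (ε : ℂ) (-ε)) 0 := by
    rw [hM, hE_cyc, fromBlocks_map, show (fun r : ℝ => (r : ℂ)) = ofRealHom from rfl,
      cyclicBidiagonal_map]
    simp
  have hdet (lam : ℂ) : det (lam • 1 - M.map (fun r : ℝ => (r : ℂ))) =
      (lam ^ 2 - ε) ^ (n + 2) - (-(ε : ℂ)) ^ (n + 2) := by
    rw [hMℂ, det_smul_one_sub_fromBlocks_zero_one_zero, smul_one_sub_cyclicBidiagonal,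
      det_cyclicBidiagonal, neg_neg]
  have hε0 : (-(ε : ℂ)) ≠ 0 := neg_ne_zero.mpr (ofReal_ne_zero.mpr hε.ne')
  intro lam
  rw [hdet, sub_eq_zero]
  refine ⟨?_, fun h => ?_⟩
  · rw [pow_eq_pow_iff_exists_eq_mul_exp hε0 (by omega)]
    refine exists_congr fun k => and_congr_right fun _ => ?_
    constructor <;> intro h <;> linear_combination h
  · have hnorm : ‖lam ^ 2 - ε‖ = ε := by
      rw [norm_eq_of_pow_eq_pow h (by omega), norm_neg, norm_real, norm_of_nonneg hε.le]
    refine Real.le_sqrt_of_sq_le ?_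
    calc ‖lam‖ ^ 2 = ‖(lam ^ 2 - ε) + ε‖ := by rw [sub_add_cancel, norm_pow]
      _ ≤ ‖lam ^ 2 - ε‖ + ‖(ε : ℂ)‖ := norm_add_le _ _
      _ = 2 * ε := by rw [hnorm, norm_real, norm_of_nonneg hε.le]; ring
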